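/- arXiv:1304.7067 — 4 statements merged into one kernel-verified Lean document; each statement's English description precedes it below -/
import Mathlib

section
/- For any nonempty strings s and p and any interval [b, e] with 1 ≤ b ≤ e ≤ b + |p|, the set of occurrences of p in s that lie in [b, e] forms a single arithmetic progression (i.e., there exist integers a, c, k ≥ 0 such that Occ(s,p) ∩ [b,e] = {a + c·j : 0 ≤ j < k}). -/
/-!
Two occurrences of `p` at distance `d` make `d` a period of `p`. Inside a window
of length `|p| + 1`, take occurrences `x ≤ y ≤ z`: by Fine and Wilf, `g = gcd (y - x) (z - y)` is
a period of `p`, and the two occurrences at `x` and `z` then propagate to every `x + r` with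
`g ∣ r ≤ z - x`. A finite set of naturals with this closure property is an arithmetic
progression whose difference is the gap between its two smallest elements.
-/

/-- `w` is periodic with (positive) period candidate `c` (no upper bound on `c`). -/
def hasPer (w : List Char) (c : ℕ) : Prop :=
  0 < c ∧ ∀ j, j + c < w.length → w[j]? = w[j + c]?

/-- `c` is a period of `w`: `0 < c ≤ |w|` and `w[i] = w[i+c]` for all valid `i`. -/
def hasPeriod (w : List Char) (c : ℕ) : Prop :=
  hasPer w c ∧ c ≤ w.length

/-- the substring `s[i..j]` (1-indexed, inclusive). -/
def sub (s : List Char) (i j : ℕ) : List Char :=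
  (s.drop (i - 1)).take (j - i + 1)

/-- `p` occurs in `s` at (1-indexed) position `i`. -/
def occursAt (s p : List Char) (i : ℕ) : Prop :=
  1 ≤ i ∧ i + p.length ≤ s.length + 1 ∧ sub s i (i + p.length - 1) = p

/-- `u^k` -/
def listPow (u : List Char) (k : ℕ) : List Char := (List.replicate k u).flatten

/-- `u` is primitive: not of the form `v^k` with `k > 1`. -/
def primitive (u : List Char) : Prop :=
  ¬ ∃ v k, 1 < k ∧ u = listPow v k

/-- `⟨b,e,c⟩` is a run of `s` (1-indexed). -/
def isRun (s : List Char) (b e c : ℕ) : Prop :=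
  1 ≤ b ∧ b ≤ e ∧ e ≤ s.length ∧
  2 * c ≤ e - b + 1 ∧
  hasPeriod (sub s b e) c ∧
  (∀ c', hasPeriod (sub s b e) c' → c ≤ c') ∧
  (1 < b → ¬ hasPer (sub s (b - 1) e) c) ∧
  (e < s.length → ¬ hasPer (sub s b (e + 1)) c)

/-- length of the longest common prefix. -/
def lcp : List Char → List Char → ℕ
  | a :: u, b :: v => if a = b then lcp u v + 1 else 0
  | _, _ => 0

/-- length of the longest common suffix. -/
def lcs (u v : List Char) : ℕ := lcp u.reverse v.reverse

/-- `per_R(w,c)`: length of the longest prefix of `w` having period `c`. -/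
noncomputable def perR (w : List Char) (c : ℕ) : ℕ :=
  sSup {r | r ≤ w.length ∧ hasPer (w.take r) c}

/-- `per_L(w,c)`: length of the longest suffix of `w` having period `c`. -/
noncomputable def perL (w : List Char) (c : ℕ) : ℕ :=
  sSup {r | r ≤ w.length ∧ hasPer (w.drop (w.length - r)) c}

/-- A weak period: unlike `hasPer`, `c = 0` is allowed, so that the periodicity lemma below
needs no positivity side conditions. -/
def IsPeriod {α : Type*} (w : List α) (c : ℕ) : Prop :=
  ∀ j, j + c < w.length → w[j]? = w[j + c]?

namespace IsPeriod

variable {α : Type*} {w : List α} {a c : ℕ}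

theorem mul (h : IsPeriod w c) : ∀ k, IsPeriod w (c * k)
  | 0 => fun j _ => by simp
  | k + 1 => fun j hj => by
    rw [Nat.mul_succ] at hj ⊢
    rw [h j (by omega), mul h k (j + c) (by omega)]
    congr 1
    omega

theorem of_dvd (h : IsPeriod w c) (hcd : c ∣ a) : IsPeriod w a := by
  obtain ⟨k, rfl⟩ := hcd
  exact h.mul k

theorem sub (ha : IsPeriod w a) (hc : IsPeriod w c) (hac : a ≤ c) (hlen : a + c ≤ w.length) :
    IsPeriod w (c - a) := by
  intro j hj
  by_cases hjc : j + c < w.length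
  · rw [hc j hjc, ha (j + (c - a)) (by omega)]
    congr 1
    omega
  · obtain ⟨i, rfl⟩ : ∃ i, j = i + a := ⟨j - a, by omega⟩
    rw [← ha i (by omega), hc i (by omega)]
    congr 1
    omega

/-- The periodicity lemma of Fine and Wilf (weak form). -/
theorem gcd (ha : IsPeriod w a) (hc : IsPeriod w c) (hlen : a + c ≤ w.length) :
    IsPeriod w (Nat.gcd a c) := by
  induction hn : a + c using Nat.strong_induction_on generalizing a c with
  | _ n ih =>
    wlog hac : a ≤ c generalizing a c
    · rw [Nat.gcd_comm]
      exact this hc ha (by omega) (by omega) (by omega)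
    rcases Nat.eq_zero_or_pos a with rfl | ha0
    · simpa using hc
    rw [← Nat.gcd_sub_self_right hac]
    exact ih c (by omega) ha (ha.sub hc hac hlen) (by omega) (by omega)

end IsPeriod

section Occurrences

variable {s p : List Char}

theorem occursAt_iff (hp : p ≠ []) {i : ℕ} :
    occursAt s p i ↔ 1 ≤ i ∧ ∀ t < p.length, s[i - 1 + t]? = p[t]? := by
  have hlen : 0 < p.length := List.length_pos_iff.mpr hp
  have hsub : sub s i (i + p.length - 1) = (s.drop (i - 1)).take p.length := by
    rw [sub, show i + p.length - 1 - i + 1 = p.length by omega]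
  simp only [occursAt, hsub]
  constructor
  · rintro ⟨hi, -, heq⟩
    refine ⟨hi, fun t ht => ?_⟩
    rw [← List.getElem?_drop, ← heq, List.getElem?_take, if_pos ht]
  · rintro ⟨hi, heq⟩
    have hbound : i - 1 + (p.length - 1) < s.length := by
      by_contra! h
      have hlast := heq (p.length - 1) (by omega)
      rw [List.getElem?_eq_none h, eq_comm, List.getElem?_eq_none_iff] at hlast
      omega
    refine ⟨hi, by omega, List.ext_getElem? fun t => ?_⟩
    rw [List.getElem?_take, List.getElem?_drop]
    split_ifs with ht
    · exact heq t ht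
    · rw [List.getElem?_eq_none (by omega)]

theorem IsPeriod.of_occursAt (hp : p ≠ []) {x d : ℕ} (hx : occursAt s p x)
    (hy : occursAt s p (x + d)) : IsPeriod p d := by
  rw [occursAt_iff hp] at hx hy
  intro j hj
  rw [← hy.2 j (by omega), ← hx.2 (j + d) hj]
  congr 1
  omega

/-- The occurrences at `x` and `x + D` cover `s` from `x` to `x + D + |p|`: the period `r`
shifts the first one onto the part it covers, the period `D - r` shifts the second one. -/
theorem occursAt_add_of_isPeriod (hp : p ≠ []) {x D r : ℕ} (hx : occursAt s p x)
    (hy : occursAt s p (x + D)) (hD : D ≤ p.length) (hr : r ≤ D) (h₁ : IsPeriod p r)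
    (h₂ : IsPeriod p (D - r)) : occursAt s p (x + r) := by
  rw [occursAt_iff hp] at hx hy ⊢
  refine ⟨by omega, fun t ht => ?_⟩
  by_cases htr : t + r < p.length
  · rw [h₁ t htr, ← hx.2 (t + r) htr]
    congr 1
    omega
  · obtain ⟨u, rfl⟩ : ∃ u, t = u + (D - r) := ⟨t - (D - r), by omega⟩
    rw [← h₂ u ht, ← hy.2 u (by omega)]
    congr 1
    omega

theorem occursAt_add_of_gcd_dvd (hp : p ≠ []) {x y z r : ℕ} (hx : occursAt s p x)
    (hy : occursAt s p y) (hz : occursAt s p z) (hxy : x ≤ y) (hyz : y ≤ z)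
    (hzx : z - x ≤ p.length) (hr : r ≤ z - x) (hgr : Nat.gcd (y - x) (z - y) ∣ r) :
    occursAt s p (x + r) := by
  have period (u v : ℕ) (hu : occursAt s p u) (hv : occursAt s p v) (huv : u ≤ v) :
      IsPeriod p (v - u) :=
    IsPeriod.of_occursAt hp hu (by rwa [Nat.add_sub_cancel' huv])
  have hg : IsPeriod p (Nat.gcd (y - x) (z - y)) :=
    (period x y hx hy hxy).gcd (period y z hy hz hyz) (by omega)
  have hgD : Nat.gcd (y - x) (z - y) ∣ z - x := by
    rw [show z - x = (y - x) + (z - y) by omega]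
    exact dvd_add (Nat.gcd_dvd_left _ _) (Nat.gcd_dvd_right _ _)
  exact occursAt_add_of_isPeriod hp hx (by rwa [Nat.add_sub_cancel' (hxy.trans hyz)]) hzx hr
    (hg.of_dvd hgr) (hg.of_dvd (Nat.dvd_sub hgD hgr))

end Occurrences

theorem exists_lt_succ_and_eq_add_mul_iff {a c n i : ℕ} (hc : 0 < c) :
    (∃ j < n + 1, i = a + c * j) ↔ a ≤ i ∧ i ≤ a + c * n ∧ c ∣ i - a := by
  constructor
  · rintro ⟨j, hj, rfl⟩
    exact ⟨Nat.le_add_right _ _, by gcongr; omega, by simp⟩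
  · rintro ⟨hai, hin, j, hj⟩
    have : c * j ≤ c * n := by omega
    exact ⟨j, by have := Nat.le_of_mul_le_mul_left this hc; omega, by omega⟩

def GcdClosed (S : Finset ℕ) : Prop :=
  ∀ x ∈ S, ∀ y ∈ S, ∀ z ∈ S, x ≤ y → y ≤ z → ∀ r ≤ z - x, Nat.gcd (y - x) (z - y) ∣ r → x + r ∈ S

namespace GcdClosed

variable {S : Finset ℕ}

/-- Otherwise `m + gcd (m' - m) (x - m')` would lie in `S` strictly between `m` and `m'`. -/
theorem dvd_sub (hS : GcdClosed S) {m m' x : ℕ} (hm : m ∈ S) (hm' : m' ∈ S) (hlt : m < m')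
    (hgap : ∀ y ∈ S, m < y → m' ≤ y) (hx : x ∈ S) (hx' : m' ≤ x) : m' - m ∣ x - m := by
  set g := Nat.gcd (m' - m) (x - m')
  have hg_pos : 0 < g := Nat.gcd_pos_of_pos_left _ (by omega)
  have hg_le : g ≤ m' - m := Nat.le_of_dvd (by omega) (Nat.gcd_dvd_left _ _)
  have hg_mem : m + g ∈ S := hS m hm m' hm' x hx hlt.le hx' g (by omega) dvd_rfl
  have hg_eq : g = m' - m := le_antisymm hg_le (by have := hgap _ hg_mem (by omega); omega)
  have hdvd : m' - m ∣ x - m' := hg_eq ▸ Nat.gcd_dvd_right _ _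
  rw [show x - m = (m' - m) + (x - m') by omega]
  exact dvd_add dvd_rfl hdvd

theorem exists_eq_arithProg (hS : GcdClosed S) :
    ∃ a c k : ℕ, ∀ i, i ∈ S ↔ ∃ j < k, i = a + c * j := by
  classical
  rcases S.eq_empty_or_nonempty with rfl | hne
  · exact ⟨0, 0, 0, by simp⟩
  set m := S.min' hne
  have hm : m ∈ S := S.min'_mem hne
  by_cases hsucc : ∃ y, y ∈ S ∧ m < y
  swap
  · simp only [not_exists, not_and, not_lt] at hsucc
    refine ⟨m, 0, 1, fun i => ⟨fun hi => ⟨0, one_pos, ?_⟩, ?_⟩⟩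
    · have := S.min'_le i hi
      have := hsucc i hi
      omega
    · rintro ⟨j, -, rfl⟩
      simpa using hm
  set m' := Nat.find hsucc
  obtain ⟨hm', hlt⟩ : m' ∈ S ∧ m < m' := Nat.find_spec hsucc
  have hgap (y : ℕ) (hy : y ∈ S) (hmy : m < y) : m' ≤ y := Nat.find_min' hsucc ⟨hy, hmy⟩
  have hdvd (x : ℕ) (hx : x ∈ S) : m' - m ∣ x - m := by
    rcases (S.min'_le x hx).eq_or_lt with hxm | hxm
    · simp [← hxm, m]
    · exact hS.dvd_sub hm hm' hlt hgap hx (hgap x hx hxm)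
  set M := S.max' hne
  have hM : M ∈ S := S.max'_mem hne
  have hmM' : m' ≤ M := S.le_max' m' hm'
  obtain ⟨n, hn⟩ := hdvd M hM
  refine ⟨m, m' - m, n + 1, fun i => ?_⟩
  rw [exists_lt_succ_and_eq_add_mul_iff (by omega), ← hn]
  constructor
  · intro hi
    exact ⟨S.min'_le i hi, by have := S.le_max' i hi; omega, hdvd i hi⟩
  · rintro ⟨hmi, hiM, hi⟩
    have hgcd : Nat.gcd (m' - m) (M - m') = m' - m :=
      Nat.gcd_eq_left ⟨n - 1, by rw [Nat.mul_sub_one]; omega⟩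
    have := hS m hm m' hm' M hM hlt.le hmM' (i - m) (by omega) (by rwa [hgcd])
    rwa [Nat.add_sub_cancel' hmi] at this

end GcdClosed

theorem stmt0_general (s p : List Char) (hp : p ≠ [])
    (b e : ℕ) (he : e ≤ b + p.length) :
    ∃ a c k : ℕ, ∀ i, (occursAt s p i ∧ b ≤ i ∧ i ≤ e) ↔ ∃ j < k, i = a + c * j := by
  classical
  set S := (Finset.Icc b e).filter (occursAt s p)
  have hmem (i : ℕ) : i ∈ S ↔ occursAt s p i ∧ b ≤ i ∧ i ≤ e := by
    simp [S, and_comm]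
  have hS : GcdClosed S := by
    intro x hx y hy z hz hxy hyz r hr hgr
    rw [hmem] at hx hy hz ⊢
    exact ⟨occursAt_add_of_gcd_dvd hp hx.1 hy.1 hz.1 hxy hyz (by omega) hr hgr, by omega, by omega⟩
  obtain ⟨a, c, k, h⟩ := hS.exists_eq_arithProg
  exact ⟨a, c, k, fun i => (hmem i).symm.trans (h i)⟩

theorem stmt0 (s p : List Char) (hs : s ≠ []) (hp : p ≠ [])
    (b e : ℕ) (hb : 1 ≤ b) (hbe : b ≤ e) (he : e ≤ b + p.length) :
    ∃ a c k : ℕ, ∀ i, (occursAt s p i ∧ b ≤ i ∧ i ≤ e) ↔ ∃ j < k, i = a + c * j :=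
  stmt0_general s p hp b e he
end

section
/- Let {a_0, a_1, ..., a_k} be consecutive occurrences of p in s forming an arithmetic progression with common difference c ≤ |p|, and for 0 ≤ j ≤ k let z_j = s[a_j + |p| .. |s|]. For any nonempty string x, writing α = per_R(p·z_0, c) − |p| and β = per_R(p·x, c) − |p|, if α − c·j ≠ β then lcp(z_j, x) = min{α − c·j, β}. -/
/-! The word `p · z_j` is `p · z_0` with its first `c j` letters removed.  Since `c ≤ |p|`,
the occurrences of `p` at distance `c` overlap and glue into a `c`-periodic prefix of `p · z_0`
of length `c j + |p|`, so `per_R(p · z_j, c) = per_R(p · z_0, c) - c j`.  Two words with a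
common prefix of length at least `c` agree up to the shorter of their `c`-periodic prefixes;
where that one ends, the shorter word breaks the period while the longer keeps it, so they
differ there.  Hence `lcp(p · z_j, p · x) = min(per_R(p · z_j, c), per_R(p · x, c))` whenever
the two values differ, and stripping the common `p` gives the formula. -/

theorem lcp_comm : ∀ u v : List Char, lcp u v = lcp v u
  | a :: u, b :: v => by
    by_cases h : a = b
    · simp [lcp, h, lcp_comm u v]
    · simp [lcp, h, Ne.symm h]
  | [], [] | [], _ :: _ | _ :: _, [] => rfl

theorem lcp_le_length_left : ∀ u v : List Char, lcp u v ≤ u.length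
  | a :: u, b :: v => by
    have := lcp_le_length_left u v
    simp only [lcp, List.length_cons]
    split <;> omega
  | [], _ | _ :: _, [] => by simp [lcp]

theorem getElem?_eq_of_lt_lcp : ∀ {u v : List Char} {i : ℕ}, i < lcp u v → u[i]? = v[i]?
  | a :: u, b :: v, i, h => by
    simp only [lcp] at h
    split at h
    · subst a
      cases i with
      | zero => rfl
      | succ i => simpa using getElem?_eq_of_lt_lcp (u := u) (v := v) (by omega)
    · omega
  | [], _, _, h | _ :: _, [], _, h => by simp [lcp] at h

theorem le_lcp_of_forall_getElem?_eq : ∀ {u v : List Char} {n : ℕ}, n ≤ u.length →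
    (∀ i < n, u[i]? = v[i]?) → n ≤ lcp u v
  | _, _, 0, _, _ => Nat.zero_le _
  | a :: u, v, n + 1, hn, h => by
    cases v with
    | nil => simpa using h 0 (Nat.succ_pos n)
    | cons b v =>
      have hab : a = b := by simpa using h 0 (Nat.succ_pos n)
      have := le_lcp_of_forall_getElem?_eq (u := u) (v := v) (n := n) (by simpa using hn)
        fun i hi => by simpa using h (i + 1) (by omega)
      rw [lcp, if_pos hab]
      omega
  | [], _, n + 1, hn, _ => by simp at hn

theorem lcp_append_left (p u v : List Char) : lcp (p ++ u) (p ++ v) = p.length + lcp u v := by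
  induction p with
  | nil => simp
  | cons a p ih =>
    rw [List.cons_append, List.cons_append, lcp, if_pos rfl, ih, List.length_cons]
    omega

section Periodicity

variable {w u v : List Char} {c : ℕ}

theorem hasPer_take_iff (hc : 0 < c) {r : ℕ} (hr : r ≤ w.length) :
    hasPer (w.take r) c ↔ ∀ q, q + c < r → w[q]? = w[q + c]? := by
  have hlen : (w.take r).length = r := List.length_take_of_le hr
  refine ⟨fun ⟨_, h⟩ q hq => ?_, fun h => ⟨hc, fun q hq => ?_⟩⟩
  · simpa [List.getElem?_take_of_lt, show q < r by omega, hq] using h q (by omega)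
  · rw [List.getElem?_take_of_lt (by omega), List.getElem?_take_of_lt (by omega)]
    exact h q (by omega)

theorem hasPer_take_of_le (hc : 0 < c) {r : ℕ} (hr : r ≤ c) : hasPer (w.take r) c :=
  ⟨hc, fun q hq => by have := List.length_take_le r w; omega⟩

theorem bddAbove_perR_set (w : List Char) (c : ℕ) :
    BddAbove {r | r ≤ w.length ∧ hasPer (w.take r) c} :=
  ⟨w.length, fun _ hr => hr.1⟩

theorem le_perR {r : ℕ} (hr : r ≤ w.length) (h : hasPer (w.take r) c) : r ≤ perR w c :=
  le_csSup (bddAbove_perR_set w c) ⟨hr, h⟩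

theorem perR_spec (hc : 0 < c) : perR w c ≤ w.length ∧ hasPer (w.take (perR w c)) c :=
  Nat.sSup_mem (s := {r | r ≤ w.length ∧ hasPer (w.take r) c})
    ⟨0, Nat.zero_le _, hasPer_take_of_le hc (Nat.zero_le c)⟩ (bddAbove_perR_set w c)

theorem getElem?_eq_of_lt_perR (hc : 0 < c) {q : ℕ} (hq : q + c < perR w c) :
    w[q]? = w[q + c]? :=
  (hasPer_take_iff hc (perR_spec hc).1).1 (perR_spec hc).2 q hq

theorem exists_getElem?_ne_of_perR_lt (hc : 0 < c) (hlt : perR w c < w.length) :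
    ∃ q, q + c = perR w c ∧ w[q]? ≠ w[q + c]? := by
  have hnot : ¬ hasPer (w.take (perR w c + 1)) c := fun h => by
    have := le_perR hlt h
    omega
  rw [hasPer_take_iff hc hlt] at hnot
  push Not at hnot
  obtain ⟨q, hq, hne⟩ := hnot
  refine ⟨q, ?_, hne⟩
  by_contra hqc
  exact hne (getElem?_eq_of_lt_perR hc (by omega))

theorem perR_drop_add (hc : 0 < c) {t : ℕ} (ht : t + c ≤ perR w c) :
    perR (w.drop t) c + t = perR w c := by
  obtain ⟨hle, -⟩ := perR_spec (w := w) hc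
  obtain ⟨hle', -⟩ := perR_spec (w := w.drop t) hc
  have hlen : (w.drop t).length = w.length - t := List.length_drop
  apply le_antisymm
  · apply le_perR (by omega)
    rw [hasPer_take_iff hc (by omega)]
    intro q hq
    rcases Nat.lt_or_ge q t with h | h
    · exact getElem?_eq_of_lt_perR hc (by omega)
    · have := getElem?_eq_of_lt_perR (w := w.drop t) hc (q := q - t) (by omega)
      rwa [List.getElem?_drop, List.getElem?_drop, Nat.add_sub_cancel' h,
        ← Nat.add_assoc, Nat.add_sub_cancel' h] at this
  · suffices perR w c - t ≤ perR (w.drop t) c by omega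
    apply le_perR (by omega)
    rw [hasPer_take_iff hc (by omega)]
    intro q hq
    rw [List.getElem?_drop, List.getElem?_drop, ← Nat.add_assoc]
    exact getElem?_eq_of_lt_perR hc (by omega)

theorem lcp_eq_perR_of_perR_lt (hc : 0 < c) (hcl : c ≤ lcp u v) (hlt : perR u c < perR v c) :
    lcp u v = perR u c := by
  have hagree : ∀ i < perR u c, u[i]? = v[i]? := by
    intro i
    induction i using Nat.strong_induction_on with
    | _ i ih =>
      intro hi
      rcases Nat.lt_or_ge i c with hic | hic
      · exact getElem?_eq_of_lt_lcp (by omega)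
      · obtain ⟨q, rfl⟩ : ∃ q, i = q + c := ⟨i - c, by omega⟩
        rw [← getElem?_eq_of_lt_perR hc hi, ← getElem?_eq_of_lt_perR hc (by omega),
          ih q (by omega) (by omega)]
  apply le_antisymm _ (le_lcp_of_forall_getElem?_eq (perR_spec hc).1 hagree)
  rcases (perR_spec (w := u) hc).1.lt_or_eq with hshort | hfull
  · obtain ⟨q, hq, hne⟩ := exists_getElem?_ne_of_perR_lt hc hshort
    by_contra! hgt
    apply hne
    rw [getElem?_eq_of_lt_lcp (v := v) (i := q) (by omega),
      getElem?_eq_of_lt_lcp (v := v) (i := q + c) (by omega)]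
    exact getElem?_eq_of_lt_perR hc (by omega)
  · exact hfull ▸ lcp_le_length_left u v

theorem lcp_eq_min_perR (hc : 0 < c) (hcl : c ≤ lcp u v) (hne : perR u c ≠ perR v c) :
    lcp u v = min (perR u c) (perR v c) := by
  rcases hne.lt_or_gt with hlt | hgt
  · rw [lcp_eq_perR_of_perR_lt hc hcl hlt, min_eq_left hlt.le]
  · rw [lcp_comm, lcp_eq_perR_of_perR_lt hc (lcp_comm u v ▸ hcl) hgt, min_eq_right hgt.le]

variable {p : List Char}

theorem getElem?_add_eq_of_prefix_drop {t r : ℕ} (h : p <+: w.drop t) (hr : r < p.length) :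
    w[t + r]? = p[r]? := by
  obtain ⟨y, hy⟩ := h
  rw [← List.getElem?_drop, ← hy, List.getElem?_append_left hr]

theorem hasPer_take_of_prefix_drop_mul (hc : 0 < c) (hcp : c ≤ p.length) {j : ℕ} (hj : 0 < j)
    (hocc : ∀ i ≤ j, p <+: w.drop (c * i)) : hasPer (w.take (c * j + p.length)) c := by
  obtain ⟨j, rfl⟩ : ∃ j', j = j' + 1 := ⟨j - 1, by omega⟩
  refine ⟨hc, fun q hq => ?_⟩
  have hlen := List.length_take_le (c * (j + 1) + p.length) w
  have hcj : c * (j + 1) = c * j + c := Nat.mul_succ c j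
  rw [List.getElem?_take_of_lt (by omega), List.getElem?_take_of_lt (by omega)]
  obtain ⟨i, hi, hiq, hr⟩ : ∃ i ≤ j, c * i ≤ q ∧ q - c * i < p.length := by
    by_cases hqj : q / c ≤ j
    · refine ⟨q / c, hqj, Nat.mul_div_le q c, ?_⟩
      have := Nat.lt_mul_div_succ q hc
      rw [Nat.mul_succ] at this
      omega
    · refine ⟨j, le_rfl, ?_, by omega⟩
      exact (Nat.mul_le_mul_left c (by omega)).trans (Nat.mul_div_le q c)
  have hshift : c * i + (q - c * i) + c = c * (i + 1) + (q - c * i) := by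
    rw [Nat.mul_succ]
    omega
  rw [show q = c * i + (q - c * i) by omega, hshift,
    getElem?_add_eq_of_prefix_drop (hocc i (by omega)) hr,
    getElem?_add_eq_of_prefix_drop (hocc (i + 1) (by omega)) hr]

theorem perR_drop_mul_add (hc : 0 < c) (hcp : c ≤ p.length) {j : ℕ}
    (hocc : ∀ i ≤ j, p <+: w.drop (c * i)) : perR (w.drop (c * j)) c + c * j = perR w c := by
  rcases Nat.eq_zero_or_pos j with rfl | hj
  · simp
  have hlen : c * j + p.length ≤ w.length := by
    have := (hocc j le_rfl).length_le
    rw [List.length_drop] at this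
    omega
  exact perR_drop_add hc ((Nat.add_le_add_left hcp _).trans
    (le_perR hlen (hasPer_take_of_prefix_drop_mul hc hcp hj hocc)))

end Periodicity

theorem append_drop_eq_drop_of_occursAt {s p : List Char} {i : ℕ} (hp : 0 < p.length)
    (h : occursAt s p i) :
    p ++ s.drop (i + p.length - 1) = s.drop (i - 1) := by
  obtain ⟨hi, -, hsub⟩ := h
  rw [sub, show i + p.length - 1 - i + 1 = p.length by omega] at hsub
  conv_rhs => rw [← List.take_append_drop p.length (s.drop (i - 1)), hsub, List.drop_drop]
  rw [show i - 1 + p.length = i + p.length - 1 by omega]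

theorem stmt2_general (s p x : List Char)
    (a₀ c k : ℕ) (hc : 0 < c) (hcp : c ≤ p.length)
    (hocc : ∀ j ≤ k, occursAt s p (a₀ + c * j))
    (z : ℕ → List Char) (hz : ∀ j, z j = s.drop (a₀ + c * j + p.length - 1))
    (α β : ℤ)
    (hα : α = (perR (p ++ z 0) c : ℤ) - p.length)
    (hβ : β = (perR (p ++ x) c : ℤ) - p.length)
    (j : ℕ) (hj : j ≤ k) (hne : α - c * j ≠ β) :
    (lcp (z j) x : ℤ) = min (α - c * j) β := by
  subst hα hβ
  have hp : 0 < p.length := hc.trans_le hcp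
  have ha₀ : 1 ≤ a₀ := (hocc 0 (Nat.zero_le k)).1
  have hzdrop : ∀ i ≤ k, p ++ z i = (p ++ z 0).drop (c * i) := by
    intro i hi
    rw [hz, hz, append_drop_eq_drop_of_occursAt hp (hocc i hi),
      append_drop_eq_drop_of_occursAt hp (hocc 0 (Nat.zero_le k)), Nat.mul_zero, List.drop_drop]
    congr 1
    omega
  have hshift : perR (p ++ z j) c + c * j = perR (p ++ z 0) c :=
    hzdrop j hj ▸ perR_drop_mul_add hc hcp fun i hi =>
      hzdrop i (hi.trans hj) ▸ List.prefix_append _ _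
  have hlcp : p.length + lcp (z j) x = min (perR (p ++ z j) c) (perR (p ++ x) c) := by
    rw [← lcp_append_left]
    exact lcp_eq_min_perR hc (by rw [lcp_append_left]; omega) (by omega)
  omega

theorem stmt2 (s p x : List Char) (hp : p ≠ []) (hx : x ≠ [])
    (a₀ c k : ℕ) (hc : 0 < c) (hcp : c ≤ p.length)
    (hocc : ∀ j ≤ k, occursAt s p (a₀ + c * j))
    (hconsec : ∀ i, a₀ ≤ i → i ≤ a₀ + c * k → occursAt s p i → ∃ j ≤ k, i = a₀ + c * j)
    (z : ℕ → List Char) (hz : ∀ j, z j = s.drop (a₀ + c * j + p.length - 1))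
    (α β : ℤ)
    (hα : α = (perR (p ++ z 0) c : ℤ) - p.length)
    (hβ : β = (perR (p ++ x) c : ℤ) - p.length)
    (j : ℕ) (hj : j ≤ k) (hne : α - c * j ≠ β) :
    (lcp (z j) x : ℤ) = min (α - c * j) β :=
  stmt2_general s p x a₀ c k hc hcp hocc z hz α β hα hβ j hj hne
end

section
/- For every run ⟨b, e, c⟩ in a string s, every substring of s[b..e] of length 2c is a square. -/
/-!
The window has period `c` and length `2c`, so it is a square `u u` with `|u| = c`. If `u = v^k`
with `k > 1`, the window also has period `d = |v| < c`. It contains `c + d` consecutive letters of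
the `c`-periodic run, and copying letters `c` positions to the left and right spreads the period `d`
from the window to the whole run, contradicting the minimality of `c`.
-/

def PeriodicOn {α : Type*} (f : ℕ → α) (p lo hi : ℕ) : Prop :=
  ∀ x, lo ≤ x → x + p < hi → f x = f (x + p)

namespace PeriodicOn

variable {α : Type*} {f : ℕ → α} {c d lo hi a : ℕ}

theorem mono {lo' hi' : ℕ} (h : PeriodicOn f d lo hi) (hlo : lo ≤ lo') (hhi : hi' ≤ hi) :
    PeriodicOn f d lo' hi' :=
  fun x hx hxd => h x (hlo.trans hx) (by omega)

theorem extend_right (hc : PeriodicOn f c lo hi) (hc0 : 0 < c) (ha : lo ≤ a)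
    (hw : PeriodicOn f d a (a + c + d)) : PeriodicOn f d a hi := by
  intro x
  induction x using Nat.strong_induction_on with
  | _ x ih =>
    intro hax hxd
    by_cases hx : x < a + c
    · exact hw x hax (by omega)
    · obtain ⟨y, rfl⟩ : ∃ y, x = y + c := ⟨x - c, by omega⟩
      calc f (y + c) = f y := (hc y (by omega) (by omega)).symm
        _ = f (y + d) := ih y (by omega) (by omega) (by omega)
        _ = f (y + d + c) := hc (y + d) (by omega) (by omega)
        _ = f (y + c + d) := by rw [Nat.add_right_comm]

theorem extend_left (hc : PeriodicOn f c lo hi) (hc0 : 0 < c) (hhi : a + c + d ≤ hi)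
    (hw : PeriodicOn f d a hi) : PeriodicOn f d lo hi := by
  intro x hlo hxd
  induction hn : a - x using Nat.strong_induction_on generalizing x with
  | _ n ih =>
    by_cases hax : a ≤ x
    · exact hw x hax hxd
    · calc f x = f (x + c) := hc x hlo (by omega)
        _ = f (x + c + d) := ih _ (by omega) (x + c) (by omega) (by omega) rfl
        _ = f (x + d + c) := by rw [Nat.add_right_comm]
        _ = f (x + d) := (hc (x + d) (by omega) (by omega)).symm

theorem of_window (hc : PeriodicOn f c lo hi) (hc0 : 0 < c) (ha : lo ≤ a)
    (hhi : a + c + d ≤ hi) (hw : PeriodicOn f d a (a + c + d)) : PeriodicOn f d lo hi :=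
  extend_left hc hc0 hhi (hc.extend_right hc0 ha hw)

end PeriodicOn

theorem length_sub {s : List Char} {i j : ℕ} (hi : 1 ≤ i) (hij : i ≤ j) (hj : j ≤ s.length) :
    (sub s i j).length = j - (i - 1) := by
  simp only [sub, List.length_take, List.length_drop]
  omega

theorem getElem?_sub {s : List Char} {i j k : ℕ} (hk : k < j - i + 1) :
    (sub s i j)[k]? = s[i - 1 + k]? := by
  rw [sub, List.getElem?_take_of_lt hk, List.getElem?_drop]

theorem hasPer_sub_iff {s : List Char} {i j p : ℕ} (hi : 1 ≤ i) (hij : i ≤ j) (hj : j ≤ s.length) :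
    hasPer (sub s i j) p ↔ 0 < p ∧ PeriodicOn (s[·]?) p (i - 1) j := by
  rw [hasPer, length_sub hi hij hj]
  refine and_congr_right fun _ => ⟨fun h x hx hxp => ?_, fun h k hk => ?_⟩
  · have := h (x - (i - 1)) (by omega)
    rwa [getElem?_sub (by omega), getElem?_sub (by omega), Nat.add_sub_cancel' hx,
      ← Nat.add_assoc, Nat.add_sub_cancel' hx] at this
  · rw [getElem?_sub (by omega), getElem?_sub (by omega), ← Nat.add_assoc]
    exact h _ (by omega) (by omega)

theorem hasPer_iff_drop_prefix {w : List Char} {p : ℕ} : hasPer w p ↔ 0 < p ∧ w.drop p <+: w := by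
  rw [hasPer, List.prefix_iff_getElem?]
  refine and_congr_right fun _ => ⟨fun h k hk => ?_, fun h k hk => ?_⟩
  · rw [List.length_drop] at hk
    simp [h k (by omega), Nat.add_comm]
  · simp [h k (by rw [List.length_drop]; omega), Nat.add_comm]

theorem eq_take_append_take_of_hasPer {w : List Char} {c : ℕ} (h : hasPer w c)
    (hlen : w.length = 2 * c) : w = w.take c ++ w.take c := by
  have hpre := (hasPer_iff_drop_prefix.1 h).2
  rw [List.prefix_iff_eq_take, List.length_drop, hlen, show 2 * c - c = c by omega] at hpre
  conv_lhs => rw [← List.take_append_drop c w, hpre]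

theorem length_listPow (v : List Char) (k : ℕ) : (listPow v k).length = k * v.length := by
  simp [listPow, List.sum_replicate]

theorem listPow_add (v : List Char) (m n : ℕ) :
    listPow v (m + n) = listPow v m ++ listPow v n := by
  simp only [listPow, List.replicate_add, List.flatten_append]

theorem hasPer_listPow {v : List Char} (hv : 0 < v.length) (k : ℕ) :
    hasPer (listPow v k) v.length := by
  refine hasPer_iff_drop_prefix.2 ⟨hv, ?_⟩
  cases k with
  | zero => simp [listPow]
  | succ k =>
    have hdrop : (listPow v (k + 1)).drop v.length = listPow v k := by
      rw [Nat.add_comm, listPow_add, listPow, List.replicate_one, List.flatten_singleton,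
        List.drop_left]
    rw [hdrop, listPow_add]
    exact List.prefix_append _ _

theorem stmt6 (s : List Char) (b e c : ℕ) (hrun : isRun s b e c)
    (i : ℕ) (hbi : b ≤ i) (hie : i + 2 * c - 1 ≤ e) :
    ∃ u, primitive u ∧ sub s i (i + 2 * c - 1) = u ++ u := by
  obtain ⟨hb, hbe, hes, -, ⟨hrunc, -⟩, hmin, -, -⟩ := hrun
  obtain ⟨hc, hrunc⟩ := (hasPer_sub_iff hb hbe hes).1 hrunc
  have hwin (p : ℕ) : hasPer (sub s i (i + 2 * c - 1)) p ↔
      0 < p ∧ PeriodicOn (s[·]?) p (i - 1) (i + 2 * c - 1) :=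
    hasPer_sub_iff (hb.trans hbi) (by omega) (by omega)
  have hwlen : (sub s i (i + 2 * c - 1)).length = 2 * c := by
    rw [length_sub (hb.trans hbi) (by omega) (by omega)]
    omega
  have hsq := eq_take_append_take_of_hasPer ((hwin c).2 ⟨hc, hrunc.mono (by omega) hie⟩) hwlen
  refine ⟨_, ?_, hsq⟩
  rintro ⟨v, k, hk, hv⟩
  have hck : c = k * v.length := by
    rw [← length_listPow, ← hv, List.length_take, hwlen]
    omega
  have hv0 : 0 < v.length := Nat.pos_of_mul_pos_left (hck ▸ hc)
  have hvc : v.length < c := hck ▸ (Nat.lt_mul_iff_one_lt_left hv0).2 hk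
  have hwv : hasPer (sub s i (i + 2 * c - 1)) v.length := by
    rw [hsq, hv, ← listPow_add]
    exact hasPer_listPow hv0 _
  have hrunv : PeriodicOn (s[·]?) v.length (b - 1) e :=
    hrunc.of_window hc (by omega) (by omega) (((hwin _).1 hwv).2.mono le_rfl (by omega))
  have := hmin v.length ⟨(hasPer_sub_iff hb hbe hes).2 ⟨hv0, hrunv⟩, by
    rw [length_sub hb hbe hes]; omega⟩
  omega
end

section
/- For any string s of length N, every occurrence of a square s[i..i+2c−1] (with primitive root of length c) is contained in exactly one run of s with period c. -/
namespace Stmt8Aux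

def PerOn (s : List Char) (l r c : ℕ) : Prop :=
  ∀ j, l ≤ j → j + c < r → s[j]? = s[j + c]?

lemma perOn_mono {s : List Char} {l r c l' r' : ℕ} (h : PerOn s l r c)
    (hl : l ≤ l') (hr : r' ≤ r) : PerOn s l' r' c :=
  fun j hj hjc => h j (hl.trans hj) (lt_of_lt_of_le hjc hr)

lemma sub_getElem? (s : List Char) (b e j : ℕ) :
    (sub s b e)[j]? = if j < e - b + 1 then s[b - 1 + j]? else none := by
  unfold sub
  rw [List.getElem?_take]
  by_cases h : j < e - b + 1
  · rw [if_pos h, if_pos h, List.getElem?_drop]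
  · rw [if_neg h, if_neg h]

lemma sub_length' {s : List Char} {b e : ℕ} (hb : 1 ≤ b) (hbe : b ≤ e)
    (he : e ≤ s.length) : (sub s b e).length = e - b + 1 := by
  unfold sub
  rw [List.length_take, List.length_drop]
  omega

lemma hasPer_sub_iff (s : List Char) (b e c : ℕ) (hb : 1 ≤ b) (hbe : b ≤ e)
    (he : e ≤ s.length) (hc : 0 < c) :
    hasPer (sub s b e) c ↔ PerOn s (b - 1) e c := by
  rw [hasPer, sub_length' hb hbe he]
  constructor
  · rintro ⟨-, h⟩ j hj hjc
    have h1 : j - (b - 1) + c < e - b + 1 := by omega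
    have := h (j - (b - 1)) h1
    rw [sub_getElem?, sub_getElem?, if_pos (by omega), if_pos (by omega),
      show b - 1 + (j - (b - 1)) = j from by omega,
      show b - 1 + (j - (b - 1) + c) = j + c from by omega] at this
    exact this
  · intro h
    refine ⟨hc, fun j hj => ?_⟩
    rw [sub_getElem?, sub_getElem?, if_pos (by omega), if_pos (by omega)]
    have := h (b - 1 + j) (by omega) (by omega)
    rwa [show b - 1 + j + c = b - 1 + (j + c) from by omega] at this

lemma perOn_steps {s : List Char} {l m g : ℕ} (h : PerOn s l m g) :
    ∀ k x, l ≤ x → x + k * g < m → s[x]? = s[x + k * g]? := by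
  intro k
  induction k with
  | zero => intro x _ _; simp
  | succ k ih =>
    intro x hx hxm
    have hmul : (k + 1) * g = k * g + g := by ring
    have h1 : s[x]? = s[x + g]? := h x hx (by omega)
    have h2 := ih (x + g) (by omega) (by omega)
    rw [h1, h2, show x + g + k * g = x + (k + 1) * g from by omega]

lemma fwAux : ∀ n p q : ℕ, q ≤ p → p + q ≤ n → 0 < q →
    ∀ (s : List Char) (l r : ℕ), p + q - Nat.gcd p q ≤ r - l →
    PerOn s l r p → PerOn s l r q → PerOn s l r (Nat.gcd p q) := by
  intro n
  induction n with
  | zero => intro p q _ h hq; omega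
  | succ n ih =>
    intro p q hqp hn hq s l r hwin h1 h2
    rcases eq_or_lt_of_le hqp with heq | hlt
    · subst heq
      rw [Nat.gcd_self]
      exact h1
    · set g := Nat.gcd p q with hg
      have hgpos : 0 < g := Nat.gcd_pos_of_pos_right p hq
      have hgq : g ≤ q := Nat.gcd_le_right p hq
      have hgdp : g ∣ p := Nat.gcd_dvd_left p q
      have hgdq : g ∣ q := Nat.gcd_dvd_right p q
      have hpge : q + g ≤ p := by
        have hd : g ∣ p - q := Nat.dvd_sub hgdp hgdq
        have := Nat.le_of_dvd (by omega) hd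
        omega
      have h1' : PerOn s l (r - q) (p - q) := by
        intro j hj hjc
        have hjp : j + p < r := by omega
        have e1 := h1 j hj hjp
        have e2 := h2 (j + (p - q)) (by omega) (by omega)
        rw [show j + (p - q) + q = j + p from by omega] at e2
        exact e1.trans e2.symm
      have h2' : PerOn s l (r - q) q := perOn_mono h2 le_rfl (Nat.sub_le r q)
      have hgcd' : Nat.gcd (p - q) q = g := Nat.gcd_sub_self_left (le_of_lt hlt)
      have key : PerOn s l (r - q) g := by
        rcases le_or_gt q (p - q) with h' | h'
        · have := ih (p - q) q h' (by omega) hq s l (r - q)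
            (by rw [hgcd']; omega) h1' h2'
          rwa [hgcd'] at this
        · have := ih q (p - q) (le_of_lt h') (by omega) (by omega) s l (r - q)
            (by rw [Nat.gcd_comm, hgcd']; omega) h2' h1'
          rwa [Nat.gcd_comm, hgcd'] at this
      intro j hj hjg
      rcases lt_or_ge (j + g) (r - q) with hcase | hcase
      · exact key j hj hcase
      · have hr2q : l + 2 * q ≤ r := by omega
        have e2 : s[j + g - q]? = s[j + g]? := by
          have := h2 (j + g - q) (by omega) (by omega)
          rwa [show j + g - q + q = j + g from by omega] at this
        rcases lt_or_ge j (r - q) with hj' | hj'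
        · obtain ⟨k, hk⟩ : g ∣ q - g := Nat.dvd_sub hgdq dvd_rfl
          have h3 := perOn_steps key k (j + g - q) (by omega)
            (by rw [mul_comm, ← hk]; omega)
          rw [mul_comm, ← hk, show j + g - q + (q - g) = j from by omega] at h3
          exact h3.symm.trans e2
        · have e1 := h2 (j - q) (by omega) (by omega)
          rw [show j - q + q = j from by omega] at e1
          have h3 := key (j - q) (by omega) (by omega)
          rw [show j - q + g = j + g - q from by omega] at h3
          exact e1.symm.trans (h3.trans e2)

lemma fw {s : List Char} {l r p q : ℕ} (hp : 0 < p) (hq : 0 < q)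
    (hwin : p + q - Nat.gcd p q ≤ r - l)
    (h1 : PerOn s l r p) (h2 : PerOn s l r q) : PerOn s l r (Nat.gcd p q) := by
  rcases le_total q p with h | h
  · exact fwAux (p + q) p q h le_rfl hq s l r hwin h1 h2
  · rw [Nat.gcd_comm]
    exact fwAux (p + q) q p h (by omega) hp s l r
      (by rw [Nat.gcd_comm]; omega) h2 h1

lemma listPow_succ (v : List Char) (k : ℕ) : listPow v (k + 1) = v ++ listPow v k := by
  simp only [listPow, List.replicate_succ, List.flatten_cons]

lemma eq_listPow : ∀ (k : ℕ) {w : List Char} {g : ℕ}, 0 < g → w.length = k * g →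
    (∀ j, j + g < w.length → w[j]? = w[j + g]?) →
    w = listPow (w.take g) k := by
  intro k
  induction k with
  | zero =>
    intro w g hg hlen _
    simp only [Nat.zero_mul] at hlen
    rw [List.eq_nil_of_length_eq_zero hlen]
    simp [listPow]
  | succ k ih =>
    intro w g hg hlen hper
    have hmul : (k + 1) * g = k * g + g := by ring
    have hlen' : (w.drop g).length = k * g := by
      rw [List.length_drop]; omega
    have hper' : ∀ j, j + g < (w.drop g).length → (w.drop g)[j]? = (w.drop g)[j + g]? := by
      intro j hj
      rw [List.getElem?_drop, List.getElem?_drop]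
      have := hper (g + j) (by omega)
      rwa [show g + j + g = g + (j + g) from by omega] at this
    have hres := ih hg hlen' hper'
    rcases Nat.eq_zero_or_pos k with hk | hk
    · subst hk
      have hd : w.drop g = [] := by
        simpa only [Nat.zero_mul, List.length_eq_zero_iff] using hlen'
      rw [listPow_succ, show listPow (w.take g) 0 = [] from by simp [listPow], List.append_nil,
        List.take_of_length_le (by omega)]
    · have htake : (w.drop g).take g = w.take g := by
        apply List.ext_getElem?
        intro n
        rw [List.getElem?_take, List.getElem?_take]
        by_cases hn : n < g
        · rw [if_pos hn, if_pos hn, List.getElem?_drop]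
          have := hper n (by nlinarith)
          rw [Nat.add_comm g n]
          exact this.symm
        · rw [if_neg hn, if_neg hn]
      rw [listPow_succ]
      nth_rewrite 2 [← htake]
      rw [← hres]
      exact (List.take_append_drop g w).symm

lemma perOn_union {s : List Char} {c l1 r1 l2 r2 m : ℕ}
    (h1 : PerOn s l1 r1 c) (h2 : PerOn s l2 r2 c)
    (hl1 : l1 ≤ m) (hl2 : l2 ≤ m) (hr1 : m + c ≤ r1) (hr2 : m + c ≤ r2) :
    PerOn s (min l1 l2) (max r1 r2) c := by
  intro j hj hjc
  rcases lt_or_ge j m with hjm | hjm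
  · rcases le_total l1 l2 with h | h
    · exact h1 j (by omega) (by omega)
    · exact h2 j (by omega) (by omega)
  · rcases le_total r1 r2 with h | h
    · exact h2 j (by omega) (by omega)
    · exact h1 j (by omega) (by omega)


lemma runs_eq (s : List Char) (i c b1 e1 b2 e2 : ℕ) (hi : 1 ≤ i) (hc : 0 < c)
    (h1 : isRun s b1 e1 c) (h2 : isRun s b2 e2 c)
    (hb1 : b1 ≤ i) (he1 : i + 2 * c - 1 ≤ e1)
    (hb2 : b2 ≤ i) (he2 : i + 2 * c - 1 ≤ e2) :
    b1 = b2 ∧ e1 = e2 := by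
  obtain ⟨hb1', hbe1, he1l, h2c1, hperiod1, hmin1, hleft1, hright1⟩ := h1
  obtain ⟨hb2', hbe2, he2l, h2c2, hperiod2, hmin2, hleft2, hright2⟩ := h2
  have P1 : PerOn s (b1 - 1) e1 c :=
    (hasPer_sub_iff s b1 e1 c hb1' hbe1 he1l hc).1 hperiod1.1
  have P2 : PerOn s (b2 - 1) e2 c :=
    (hasPer_sub_iff s b2 e2 c hb2' hbe2 he2l hc).1 hperiod2.1
  have Pc : PerOn s (min (b1 - 1) (b2 - 1)) (max e1 e2) c :=
    perOn_union P1 P2 (m := i - 1) (by omega) (by omega) (by omega) (by omega)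
  have hee : e1 ≤ e2 → e1 = e2 := by
    intro hle
    rcases eq_or_lt_of_le hle with h | h
    · exact h
    · exfalso
      apply hright1 (by omega)
      refine (hasPer_sub_iff s b1 (e1 + 1) c hb1' (by omega) (by omega) hc).2 ?_
      exact perOn_mono Pc (by omega) (by omega)
  have hee' : e2 ≤ e1 → e2 = e1 := by
    intro hle
    rcases eq_or_lt_of_le hle with h | h
    · exact h
    · exfalso
      apply hright2 (by omega)
      refine (hasPer_sub_iff s b2 (e2 + 1) c hb2' (by omega) (by omega) hc).2 ?_
      exact perOn_mono Pc (by omega) (by omega)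
  have hbb : b2 ≤ b1 → b1 = b2 := by
    intro hle
    rcases eq_or_lt_of_le hle with h | h
    · exact h.symm
    · exfalso
      apply hleft1 (by omega)
      refine (hasPer_sub_iff s (b1 - 1) e1 c (by omega) (by omega) he1l hc).2 ?_
      exact perOn_mono Pc (by omega) (by omega)
  have hbb' : b1 ≤ b2 → b2 = b1 := by
    intro hle
    rcases eq_or_lt_of_le hle with h | h
    · exact h.symm
    · exfalso
      apply hleft2 (by omega)
      refine (hasPer_sub_iff s (b2 - 1) e2 c (by omega) (by omega) he2l hc).2 ?_
      exact perOn_mono Pc (by omega) (by omega)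
  constructor
  · rcases le_total b1 b2 with h | h
    · exact (hbb' h).symm
    · exact hbb h
  · rcases le_total e1 e2 with h | h
    · exact hee h
    · exact (hee' h).symm

end Stmt8Aux

open Stmt8Aux in
theorem stmt8 (s : List Char) (i c : ℕ) (hi : 1 ≤ i) (hc : 0 < c)
    (hlen : i + 2 * c - 1 ≤ s.length)
    (hprim : primitive (sub s i (i + c - 1)))
    (hsq : sub s i (i + c - 1) = sub s (i + c) (i + 2 * c - 1)) :
    ∃! be : ℕ × ℕ, isRun s be.1 be.2 c ∧ be.1 ≤ i ∧ i + 2 * c - 1 ≤ be.2 := by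
  -- elementwise form of the square equation
  have hsq' : ∀ j, j < c → s[i - 1 + j]? = s[i + c - 1 + j]? := by
    intro j hj
    have := congrArg (fun t => t[j]?) hsq
    rwa [sub_getElem?, sub_getElem?, if_pos (by omega), if_pos (by omega)] at this
  have hPersq : PerOn s (i - 1) (i + 2 * c - 1) c := by
    intro j hj hjc
    have hj' : j - (i - 1) < c := by omega
    have := hsq' (j - (i - 1)) hj'
    rwa [show i - 1 + (j - (i - 1)) = j from by omega,
      show i + c - 1 + (j - (i - 1)) = j + c from by omega] at this
  -- S : candidate left endpoints
  set S : Set ℕ := {l | PerOn s l (i + 2 * c - 1) c} with hS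
  have hiS : (i - 1) ∈ S := hPersq
  set l0 := sInf S with hl0
  have hl0S : l0 ∈ S := Nat.sInf_mem ⟨_, hiS⟩
  have hl0i : l0 ≤ i - 1 := Nat.sInf_le hiS
  set T : Set ℕ := {r | r ≤ s.length ∧ PerOn s l0 r c} with hT
  have hT1 : (i + 2 * c - 1) ∈ T := ⟨hlen, hl0S⟩
  have hbdd : BddAbove T := ⟨s.length, fun x hx => hx.1⟩
  set r0 := sSup T with hr0
  have hr0T : r0 ∈ T := Nat.sSup_mem ⟨_, hT1⟩ hbdd
  have hr0ge : i + 2 * c - 1 ≤ r0 := le_csSup hbdd hT1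
  have hr0len : r0 ≤ s.length := hr0T.1
  have hP : PerOn s l0 r0 c := hr0T.2
  have hble : l0 + 1 ≤ r0 := by omega
  have hrun : isRun s (l0 + 1) r0 c := by
    refine ⟨by omega, hble, hr0len, by omega, ⟨?_, ?_⟩, ?_, ?_, ?_⟩
    · refine (hasPer_sub_iff s (l0 + 1) r0 c (by omega) hble hr0len hc).2 ?_
      simpa using hP
    · rw [sub_length' (by omega) hble hr0len]; omega
    · -- minimality of period c
      intro c' hc'
      by_contra hcon
      push_neg at hcon
      have hc'pos : 0 < c' := hc'.1.1
      have hPc' : PerOn s l0 r0 c' := by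
        have := (hasPer_sub_iff s (l0 + 1) r0 c' (by omega) hble hr0len hc'pos).1 hc'.1
        simpa using this
      set g := Nat.gcd c c' with hg
      have hgpos : 0 < g := Nat.gcd_pos_of_pos_right c hc'pos
      have hgle : g ≤ c' := Nat.gcd_le_right c hc'pos
      have hgdvd : g ∣ c := Nat.gcd_dvd_left c c'
      have hPg : PerOn s l0 r0 g := fw hc hc'pos (by omega) hP hPc'
      set u := sub s i (i + c - 1) with hu
      have hulen : u.length = c := by
        rw [hu, sub_length' hi (by omega) (by omega)]; omega
      have hperu : ∀ j, j + g < u.length → u[j]? = u[j + g]? := by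
        intro j hj
        rw [hulen] at hj
        rw [hu, sub_getElem?, sub_getElem?, if_pos (by omega), if_pos (by omega)]
        have := hPg (i - 1 + j) (by omega) (by omega)
        rwa [show i - 1 + j + g = i - 1 + (j + g) from by omega] at this
      obtain ⟨m, hm⟩ := hgdvd
      have hmge : 2 ≤ m := by
        rcases Nat.lt_or_ge m 2 with h | h
        · interval_cases m <;> omega
        · exact h
      have := eq_listPow m (w := u) hgpos (by rw [hulen, hm]; ring) hperu
      exact hprim ⟨u.take g, m, hmge, this⟩
    · -- left maximality
      intro hb1 hcontra
      have h1 : (1:ℕ) ≤ l0 := by omega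
      have hP' : PerOn s (l0 - 1) r0 c :=
        (hasPer_sub_iff s l0 r0 c h1 (by omega) hr0len hc).1 (by simpa using hcontra)
      have hmem : l0 - 1 ∈ S := perOn_mono hP' le_rfl hr0ge
      have := Nat.sInf_le hmem
      omega
    · -- right maximality
      intro hlt hcontra
      have hP' : PerOn s l0 (r0 + 1) c := by
        have := (hasPer_sub_iff s (l0 + 1) (r0 + 1) c (by omega) (by omega) (by omega) hc).1 hcontra
        simpa using this
      have hmem : r0 + 1 ∈ T := ⟨by omega, hP'⟩
      have := le_csSup hbdd hmem
      omega
  refine ⟨(l0 + 1, r0), ⟨hrun, by omega, hr0ge⟩, ?_⟩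
  rintro ⟨b2, e2⟩ ⟨hrun2, hb2i, he2i⟩
  obtain ⟨h1, h2⟩ := runs_eq s i c b2 e2 (l0 + 1) r0 hi hc hrun2 hrun hb2i he2i (by omega) hr0ge
  simp [Prod.ext_iff, h1, h2]
end
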